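/- Let k ≥ 4 be an integer, let G be a k-critical graph, and let (T, W) be a standard tree-decomposition of G. (i) If t₀ and t₁ are adjacent in T, then the two vertices in the set W_{t₀} ∩ W_{t₁} are not adjacent in G. (ii) If t₁ and t₂ are distinct neighbors of t₀ in T, then W_{t₀} ∩ W_{t₁} ≠ W_{t₀} ∩ W_{t₂}. -/

import Mathlib

open SimpleGraph

/-- A graph `G` is `k`-critical if every proper subgraph of `G` is `(k-1)`-colorable,
but `G` itself is not. -/
def IsCritical {V : Type*} (k : ℕ) (G : SimpleGraph V) : Prop :=
  ¬ G.Colorable (k - 1) ∧ ∀ H : G.Subgraph, H ≠ ⊤ → H.coe.Colorable (k - 1)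

/-- A graph is `t`-connected if it has at least `t+1` vertices and deleting any set of
at most `t-1` vertices leaves it connected. -/
def KConnected {V : Type*} (t : ℕ) (G : SimpleGraph V) : Prop :=
  t + 1 ≤ Nat.card V ∧ ∀ S : Set V, S.ncard ≤ t - 1 → (G.induce Sᶜ).Connected

/-- `(T, W)` is a tree-decomposition of `G`. -/
def IsTreeDecomp {V ι : Type*} (G : SimpleGraph V) (T : SimpleGraph ι)
    (W : ι → Set V) : Prop :=
  T.IsTree ∧
  (∀ v : V, ∃ t, v ∈ W t) ∧
  (∀ u v : V, G.Adj u v → ∃ t, u ∈ W t ∧ v ∈ W t) ∧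
  (∀ (t t' t'' : ι) (p : T.Walk t t''), p.IsPath → t' ∈ p.support →
    W t ∩ W t'' ⊆ W t')

/-- The torso of a tree-decomposition `(T, W)` of `G` at a node `t`: the graph on `W t`
in which two vertices are adjacent iff they are adjacent in `G` or they both lie in the
bag of a neighbour of `t`. -/
def torso {V ι : Type*} (G : SimpleGraph V) (T : SimpleGraph ι) (W : ι → Set V)
    (t : ι) : SimpleGraph (W t) where
  Adj u v := (u : V) ≠ (v : V) ∧
    (G.Adj u v ∨ ∃ t', T.Adj t t' ∧ (u : V) ∈ W t' ∧ (v : V) ∈ W t')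
  symm := ⟨by
    rintro u v ⟨hne, h | ⟨t', ht', hu, hv⟩⟩
    · exact ⟨hne.symm, Or.inl h.symm⟩
    · exact ⟨hne.symm, Or.inr ⟨t', ht', hv, hu⟩⟩⟩
  loopless := ⟨by rintro u ⟨hne, -⟩; exact hne rfl⟩

/-- The graph `H` is a cycle: it has a cycle passing through all of its vertices
and using all of its edges. -/
def IsCycleGraph {V : Type*} (H : SimpleGraph V) : Prop :=
  ∃ (v : V) (c : H.Walk v v), c.IsCycle ∧ (∀ u, u ∈ c.support) ∧
    ∀ e ∈ H.edgeSet, e ∈ c.edges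

/-- A tree-decomposition is standard if adjacent bags meet in exactly two vertices and
every torso is `3`-connected or a cycle. -/
def IsStandardTreeDecomp {V ι : Type*} (G : SimpleGraph V) (T : SimpleGraph ι)
    (W : ι → Set V) : Prop :=
  IsTreeDecomp G T W ∧
  (∀ t t' : ι, T.Adj t t' → (W t ∩ W t').ncard = 2) ∧
  (∀ t : ι, KConnected 3 (torso G T W t) ∨ IsCycleGraph (torso G T W t))

/-!
An edge `t₀t₁` of `T` splits `G` along the adhesion set `W t₀ ∩ W t₁` into the unions of the
bags on either side. Each side contains a whole bag, and bags have at least three vertices since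
torsos are `3`-connected or cycles, so each side misses a vertex of the other side and is
therefore `(k-1)`-colorable by criticality. Colorings of the two sides of a separator `{x, y}`
glue, after permuting colors, as soon as they agree on whether `x` and `y` receive the same
color. For (i), if `xy` is an edge both colorings separate `x` and `y`. For (ii), if the edges
`t₀t₁` and `t₀t₂` have the same adhesion set, `G` splits into three pieces meeting only in it;
of the three colorings of the unions of two pieces, two agree on `x` and `y`.
-/

open Set

theorem Equiv.Perm.exists_apply_eq_apply_eq {α : Type*} [DecidableEq α] {a b a' b' : α}
    (h : a = b ↔ a' = b') : ∃ π : Equiv.Perm α, π a = a' ∧ π b = b' := by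
  set σ := Equiv.swap a a'
  refine ⟨σ.trans (Equiv.swap (σ b) b'), ?_, by simp⟩
  by_cases hab : a = b
  · subst hab
    simp [σ, h.mp rfl]
  · have hσb : σ b ≠ a' := fun e =>
      hab (σ.injective (e.trans (Equiv.swap_apply_left a a').symm)).symm
    simp only [Equiv.trans_apply, σ, Equiv.swap_apply_left]
    exact Equiv.swap_apply_of_ne_of_ne hσb.symm fun e => hab (h.mpr e)

namespace SimpleGraph

section Coloring

variable {V α β : Type*} {G : SimpleGraph V}

def ProperOn (G : SimpleGraph V) (X : Set V) (f : V → α) : Prop :=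
  ∀ ⦃u v⦄, u ∈ X → v ∈ X → G.Adj u v → f u ≠ f v

/-- Unlike the usual notion of a separation, `A ∪ B` need not cover `V`: the vertices
outside it are isolated. -/
def IsSeparation (G : SimpleGraph V) (A B : Set V) : Prop :=
  ∀ ⦃u v⦄, G.Adj u v → u ∈ A ∧ v ∈ A ∨ u ∈ B ∧ v ∈ B

theorem ProperOn.mono {X Y : Set V} {f : V → α} (h : G.ProperOn X f) (hYX : Y ⊆ X) :
    G.ProperOn Y f :=
  fun _ _ hu hv => h (hYX hu) (hYX hv)

theorem ProperOn.comp {X : Set V} {f : V → α} (h : G.ProperOn X f) {π : α → β}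
    (hπ : Function.Injective π) : G.ProperOn X (π ∘ f) :=
  fun _ _ hu hv huv e => h hu hv huv (hπ e)

theorem IsSeparation.nonempty_coloring_of_eqOn {A B : Set V} {f g : V → α}
    (hsep : G.IsSeparation A B) (hf : G.ProperOn A f) (hg : G.ProperOn B g)
    (hfg : EqOn f g (A ∩ B)) : Nonempty (G.Coloring α) := by
  classical
  have hB : ∀ w ∈ B, A.piecewise f g w = g w := by
    intro w hw
    by_cases hwA : w ∈ A
    · rw [piecewise_eq_of_mem _ _ _ hwA]; exact hfg ⟨hwA, hw⟩
    · exact piecewise_eq_of_notMem _ _ _ hwA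
  refine ⟨Coloring.mk (A.piecewise f g) fun {u v} huv => ?_⟩
  rcases hsep huv with ⟨hu, hv⟩ | ⟨hu, hv⟩
  · rw [piecewise_eq_of_mem _ _ _ hu, piecewise_eq_of_mem _ _ _ hv]; exact hf hu hv huv
  · rw [hB u hu, hB v hv]; exact hg hu hv huv

/-- Permute the colors of `g` so that it agrees with `f` on `x` and `y`. -/
theorem IsSeparation.nonempty_coloring {A B : Set V} {x y : V} {f g : V → α}
    (hsep : G.IsSeparation A B) (hAB : A ∩ B ⊆ {x, y}) (hf : G.ProperOn A f)
    (hg : G.ProperOn B g) (htype : f x = f y ↔ g x = g y) : Nonempty (G.Coloring α) := by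
  classical
  obtain ⟨π, hπx, hπy⟩ := Equiv.Perm.exists_apply_eq_apply_eq htype.symm
  refine hsep.nonempty_coloring_of_eqOn hf (hg.comp π.injective) fun v hv => ?_
  rcases hAB hv with rfl | rfl
  exacts [hπx.symm, hπy.symm]

end Coloring

section Branch

variable {ι : Type*} {T : SimpleGraph ι} {t₀ t₁ t₂ : ι}

variable (T) in
def branch (t₀ t₁ : ι) : Set ι :=
  {t | (T.deleteEdges {s(t₀, t₁)}).Reachable t₁ t}

theorem mem_branch_self (t₀ t₁ : ι) : t₁ ∈ T.branch t₀ t₁ :=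
  Reachable.refl _

theorem mem_edges_of_mem_branch {t t' : ι} (ht : t ∉ T.branch t₀ t₁)
    (ht' : t' ∈ T.branch t₀ t₁) (p : T.Walk t t') : s(t₀, t₁) ∈ p.edges := by
  by_contra hp
  exact ht (ht'.trans (p.toDeleteEdge _ hp).reachable.symm)

theorem IsAcyclic.notMem_branch (hT : T.IsAcyclic) (h : T.Adj t₀ t₁) :
    t₀ ∉ T.branch t₀ t₁ :=
  fun h' => isAcyclic_iff_forall_adj_isBridge.mp hT h h'.symm

theorem IsAcyclic.notMem_branch_of_adj (hT : T.IsAcyclic) (h₁ : T.Adj t₀ t₁)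
    (h₂ : T.Adj t₀ t₂) (hne : t₁ ≠ t₂) : t₂ ∉ T.branch t₀ t₁ := by
  intro h
  have hadj : (T.deleteEdges {s(t₀, t₁)}).Adj t₂ t₀ := by
    simp [deleteEdges_adj, h₂.symm, h₁.ne, hne.symm]
  exact hT.notMem_branch h₁ (h.trans hadj.reachable)

theorem IsAcyclic.disjoint_branch (hT : T.IsAcyclic) (h₁ : T.Adj t₀ t₁) (h₂ : T.Adj t₀ t₂)
    (hne : t₁ ≠ t₂) : Disjoint (T.branch t₀ t₁) (T.branch t₀ t₂) := by
  classical
  rw [Set.disjoint_left]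
  rintro t ht₁ ⟨p⟩
  have he := mem_edges_of_mem_branch (hT.notMem_branch_of_adj h₁ h₂ hne) ht₁
    (p.mapLe (deleteEdges_le _))
  rw [Walk.edges_mapLe_eq_edges] at he
  exact hT.notMem_branch h₂ ⟨p.takeUntil t₀ (p.fst_mem_support_of_mem_edges he)⟩

end Branch

end SimpleGraph

theorem IsCycleGraph.three_le_card {V : Type*} [Finite V] {H : SimpleGraph V}
    (h : IsCycleGraph H) : 3 ≤ Nat.card V := by
  have := Fintype.ofFinite V
  obtain ⟨_, c, hc, -, -⟩ := h
  have hlen : c.support.tail.length = c.length := by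
    rw [List.length_tail, Walk.length_support, Nat.add_sub_cancel]
  rw [Nat.card_eq_fintype_card]
  exact hc.three_le_length.trans (hlen ▸ hc.support_nodup.length_le_card)

section Critical

variable {V : Type*} {G : SimpleGraph V} {k : ℕ}

theorem IsCritical.exists_properOn (hG : IsCritical k G) (hk : 2 ≤ k) {X : Set V}
    (hX : X ≠ univ) : ∃ f : V → Fin (k - 1), G.ProperOn X f := by
  classical
  have hne : (⊤ : G.Subgraph).induce X ≠ ⊤ := fun h => hX (by simpa using congrArg (·.verts) h)
  obtain ⟨C⟩ := hG.2 _ hne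
  refine ⟨fun v => if h : v ∈ X then C ⟨v, h⟩ else ⟨0, by omega⟩, fun u v hu hv huv => ?_⟩
  simp only [dif_pos hu, dif_pos hv]
  exact C.valid (show ((⊤ : G.Subgraph).induce X).Adj u v by simpa [hu, hv] using huv)

theorem Set.ne_univ_of_inter_subset {A B Z : Set V} (h : A ∩ B ⊆ Z) (hB : ¬ B ⊆ Z) :
    A ≠ univ := by
  rintro rfl
  exact hB (by simpa using h)

theorem IsCritical.not_adj_of_isSeparation (hG : IsCritical k G) (hk : 2 ≤ k) {A B : Set V}
    {x y : V} (hsep : G.IsSeparation A B) (hAB : A ∩ B = {x, y}) (hA : ¬ A ⊆ {x, y})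
    (hB : ¬ B ⊆ {x, y}) : ¬ G.Adj x y := by
  intro hxy
  have hx : x ∈ A ∩ B := hAB ▸ mem_insert x {y}
  have hy : y ∈ A ∩ B := hAB ▸ mem_insert_of_mem x rfl
  obtain ⟨f, hf⟩ := hG.exists_properOn hk (ne_univ_of_inter_subset hAB.subset hB)
  obtain ⟨g, hg⟩ := hG.exists_properOn hk
    (ne_univ_of_inter_subset ((inter_comm B A).trans hAB).subset hA)
  exact hG.1 (hsep.nonempty_coloring hAB.subset hf hg
    (iff_of_false (hf hx.1 hy.1 hxy) (hg hx.2 hy.2 hxy)))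

theorem IsCritical.false_of_isSeparation_of_isSeparation (hG : IsCritical k G) (hk : 2 ≤ k)
    {A₁ B₁ A₂ B₂ : Set V} {x y : V} (hsep₁ : G.IsSeparation A₁ B₁)
    (hsep₂ : G.IsSeparation A₂ B₂) (hAB₁ : A₁ ∩ B₁ ⊆ {x, y}) (hAB₂ : A₂ ∩ B₂ ⊆ {x, y})
    (hB₂A₁ : B₂ ⊆ A₁) (hB₁ : ¬ B₁ ⊆ {x, y}) (hB₂ : ¬ B₂ ⊆ {x, y})
    (hA : ¬ A₁ ∩ A₂ ⊆ {x, y}) : False := by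
  have hB : (B₁ ∪ B₂) ∩ (A₁ ∩ A₂) ⊆ {x, y} := by
    rintro v ⟨hv | hv, hv₁, hv₂⟩
    exacts [hAB₁ ⟨hv₁, hv⟩, hAB₂ ⟨hv₂, hv⟩]
  obtain ⟨f₁, hf₁⟩ := hG.exists_properOn hk (ne_univ_of_inter_subset hAB₁ hB₁)
  obtain ⟨f₂, hf₂⟩ := hG.exists_properOn hk (ne_univ_of_inter_subset hAB₂ hB₂)
  obtain ⟨g, hg⟩ := hG.exists_properOn hk (ne_univ_of_inter_subset hB hA)
  have : (f₂ x = f₂ y ↔ f₁ x = f₁ y) ∨ (f₁ x = f₁ y ↔ g x = g y) ∨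
      (f₂ x = f₂ y ↔ g x = g y) := by
    tauto
  apply hG.1
  rcases this with h | h | h
  · exact hsep₂.nonempty_coloring hAB₂ hf₂ (hf₁.mono hB₂A₁) h
  · exact hsep₁.nonempty_coloring hAB₁ hf₁ (hg.mono subset_union_left) h
  · exact hsep₂.nonempty_coloring hAB₂ hf₂ (hg.mono subset_union_right) h

end Critical

section TreeDecomp

variable {V ι : Type*} {G : SimpleGraph V} {T : SimpleGraph ι} {W : ι → Set V} {t₀ t₁ : ι}

theorem IsTreeDecomp.isSeparation_compl (hdec : IsTreeDecomp G T W) (S : Set ι) :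
    G.IsSeparation (⋃ t ∈ Sᶜ, W t) (⋃ t ∈ S, W t) := by
  intro u v huv
  obtain ⟨t, hu, hv⟩ := hdec.2.2.1 u v huv
  by_cases ht : t ∈ S
  · exact Or.inr ⟨mem_biUnion ht hu, mem_biUnion ht hv⟩
  · exact Or.inl ⟨mem_biUnion ht hu, mem_biUnion ht hv⟩

theorem IsTreeDecomp.inter_subset_of_mem_branch (hdec : IsTreeDecomp G T W) {t t' : ι}
    (ht : t ∉ T.branch t₀ t₁) (ht' : t' ∈ T.branch t₀ t₁) : W t ∩ W t' ⊆ W t₀ ∩ W t₁ := by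
  classical
  obtain ⟨htree, -, -, hpath⟩ := hdec
  obtain ⟨p⟩ := htree.connected.preconnected t t'
  have he := mem_edges_of_mem_branch ht ht' p.bypass
  exact subset_inter (hpath t t₀ t' _ p.bypass_isPath (p.bypass.fst_mem_support_of_mem_edges he))
    (hpath t t₁ t' _ p.bypass_isPath (p.bypass.snd_mem_support_of_mem_edges he))

theorem IsTreeDecomp.inter_branch_eq (hdec : IsTreeDecomp G T W) (h : T.Adj t₀ t₁) :
    (⋃ t ∈ (T.branch t₀ t₁)ᶜ, W t) ∩ (⋃ t ∈ T.branch t₀ t₁, W t) = W t₀ ∩ W t₁ := by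
  refine subset_antisymm ?_ (inter_subset_inter
    (subset_biUnion_of_mem (u := W) (hdec.1.isAcyclic.notMem_branch h))
    (subset_biUnion_of_mem (u := W) (mem_branch_self t₀ t₁)))
  rintro v ⟨hv, hv'⟩
  obtain ⟨t, ht, hvt⟩ := mem_iUnion₂.mp hv
  obtain ⟨t', ht', hvt'⟩ := mem_iUnion₂.mp hv'
  exact hdec.inter_subset_of_mem_branch ht ht' ⟨hvt, hvt'⟩

theorem IsStandardTreeDecomp.not_subset_pair [Finite V] (hstd : IsStandardTreeDecomp G T W)
    (t : ι) (x y : V) : ¬ W t ⊆ {x, y} := by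
  intro hsub
  have h3 : 3 ≤ (W t).ncard := by
    rw [← Nat.card_coe_set_eq]
    exact (hstd.2.2 t).elim (fun h => (Nat.le_succ 3).trans h.1) IsCycleGraph.three_le_card
  have h2 : ({x, y} : Set V).ncard ≤ 2 := (ncard_insert_le x {y}).trans (by simp)
  have := ncard_le_ncard hsub (toFinite _)
  omega

end TreeDecomp

theorem stmt12 (k : ℕ) (hk : 4 ≤ k)
    (V : Type) [Fintype V] (G : SimpleGraph V) (hG : IsCritical k G)
    (ι : Type) (T : SimpleGraph ι) (W : ι → Set V)
    (hstd : IsStandardTreeDecomp G T W) :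
    (∀ t₀ t₁ : ι, T.Adj t₀ t₁ →
      ∀ x ∈ W t₀ ∩ W t₁, ∀ y ∈ W t₀ ∩ W t₁, ¬ G.Adj x y) ∧
    (∀ t₀ t₁ t₂ : ι, T.Adj t₀ t₁ → T.Adj t₀ t₂ → t₁ ≠ t₂ →
      W t₀ ∩ W t₁ ≠ W t₀ ∩ W t₂) := by
  have hdec := hstd.1
  have hadh := hstd.2.1
  have hk : 2 ≤ k := by omega
  have hT := hdec.1.isAcyclic
  have hbig {S : Set ι} {t : ι} (ht : t ∈ S) (x y : V) : ¬ (⋃ t ∈ S, W t) ⊆ {x, y} :=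
    fun hsub => hstd.not_subset_pair t x y ((subset_biUnion_of_mem (u := W) ht).trans hsub)
  refine ⟨fun t₀ t₁ h x hx y hy hxy => ?_, fun t₀ t₁ t₂ h₁ h₂ hne heq => ?_⟩
  · have hpair : W t₀ ∩ W t₁ = {x, y} :=
      (eq_of_subset_of_ncard_le (insert_subset hx (singleton_subset_iff.mpr hy))
        (by rw [hadh t₀ t₁ h, ncard_pair hxy.ne]) (toFinite _)).symm
    exact hG.not_adj_of_isSeparation hk (hdec.isSeparation_compl _)
      ((hdec.inter_branch_eq h).trans hpair) (hbig (hT.notMem_branch h) x y)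
      (hbig (mem_branch_self t₀ t₁) x y) hxy
  · obtain ⟨x, y, -, hpair⟩ := ncard_eq_two.mp (hadh t₀ t₁ h₁)
    have hdisj := hT.disjoint_branch h₁ h₂ hne
    refine hG.false_of_isSeparation_of_isSeparation hk (hdec.isSeparation_compl _)
      (hdec.isSeparation_compl _) ((hdec.inter_branch_eq h₁).trans hpair).subset
      ((hdec.inter_branch_eq h₂).trans (heq ▸ hpair)).subset
      (biUnion_subset_biUnion_left hdisj.subset_compl_left)
      (hbig (mem_branch_self t₀ t₁) x y) (hbig (mem_branch_self t₀ t₂) x y) fun hsub => ?_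
    exact hstd.not_subset_pair t₀ x y (subset_trans (subset_inter
      (subset_biUnion_of_mem (u := W) (hT.notMem_branch h₁))
      (subset_biUnion_of_mem (u := W) (hT.notMem_branch h₂))) hsub)
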